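/- arXiv:1603.08204 — 8 statements merged into one kernel-verified Lean document; each statement's English description precedes it below -/
import Mathlib

section
/- Let A be a preorder, let α be an element of A, and let β, γ : A → A be functions with β monotone and γ antitone. Then β(α) ≤ γ(α) if and only if there exists p ∈ A such that α ≤ p and β(p) ≤ γ(p). -/
theorem ackermann_lemma {A : Type*} [Preorder A] (α : A) (β γ : A → A)
    (hβ : Monotone β) (hγ : Antitone γ) :
    β α ≤ γ α ↔ ∃ p : A, α ≤ p ∧ β p ≤ γ p := by
  constructor
  · intro h; exact ⟨α, le_refl _, h⟩
  · rintro ⟨p, hp, h⟩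
    exact le_trans (hβ hp) (le_trans h (hγ hp))
end

section
/- Let A be a lattice and let s, t, α, β : A → A → A be functions such that t(q,r) and α(q,r) are monotone in r and antitone in q, while s(q,r) and β(q,r) are monotone in q and antitone in r. Then the following are equivalent: (1) for all q, r ∈ A, s(q ⊓ α(q,r), r ⊔ β(q,r)) ≤ t(q ⊓ α(q,r), r ⊔ β(q,r)); (2) for all q, r ∈ A, if q ≤ α(q,r) and β(q,r) ≤ r then s(q,r) ≤ t(q,r). -/
theorem rules_to_inequalities {A : Type*} [Lattice A] (s t α β : A → A → A)
    (ht_mono : ∀ q, Monotone (t q)) (ht_anti : ∀ r, Antitone (fun q => t q r))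
    (hα_mono : ∀ q, Monotone (α q)) (hα_anti : ∀ r, Antitone (fun q => α q r))
    (hs_mono : ∀ r, Monotone (fun q => s q r)) (hs_anti : ∀ q, Antitone (s q))
    (hβ_mono : ∀ r, Monotone (fun q => β q r)) (hβ_anti : ∀ q, Antitone (β q)) :
    (∀ q r : A, s (q ⊓ α q r) (r ⊔ β q r) ≤ t (q ⊓ α q r) (r ⊔ β q r)) ↔
      (∀ q r : A, q ≤ α q r → β q r ≤ r → s q r ≤ t q r) := by
  constructor
  · intro h q r h1 h2
    have e1 : q ⊓ α q r = q := inf_eq_left.mpr h1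
    have e2 : r ⊔ β q r = r := sup_eq_left.mpr h2
    have := h q r
    rwa [e1, e2] at this
  · intro h q r
    set q' := q ⊓ α q r with hq'
    set r' := r ⊔ β q r with hr'
    apply h
    · calc q' ≤ α q r := inf_le_right
        _ ≤ α q r' := hα_mono q le_sup_left
        _ ≤ α q' r' := hα_anti r' inf_le_left
    · calc β q' r' ≤ β q r' := hβ_mono r' inf_le_left
        _ ≤ β q r := hβ_anti q le_sup_left
        _ ≤ r' := le_sup_right
end

section
/- Let A be a complete lattice, let D ⊆ A be join-dense (i.e., every a ∈ A satisfies a = sSup {d ∈ D | d ≤ a}), let f : A → A be completely join-preserving (f(sSup S) = sSup (f '' S) for every S ⊆ A), and let g : A → A be monotone. Then f(a) ≤ g(a) for all a ∈ A if and only if f(d) ≤ g(d) for all d ∈ D. -/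
theorem primitive_validity_transfer {A : Type*} [CompleteLattice A] (D : Set A)
    (hD : ∀ a : A, a = sSup {d ∈ D | d ≤ a})
    (f : A → A) (hf : ∀ S : Set A, f (sSup S) = sSup (f '' S))
    (g : A → A) (hg : Monotone g) :
    (∀ a : A, f a ≤ g a) ↔ ∀ d ∈ D, f d ≤ g d := by
  constructor
  · exact fun h d _ => h d
  · intro h a
    calc f a = sSup (f '' {d ∈ D | d ≤ a}) := by rw [← hf, ← hD]
    _ ≤ g a := by
        apply sSup_le
        rintro _ ⟨d, ⟨hdD, hda⟩, rfl⟩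
        exact le_trans (h d hdD) (hg hda)
end

section
/- Let A be a complete lattice, let M ⊆ A be meet-dense (i.e., every a ∈ A satisfies a = sInf {m ∈ M | a ≤ m}), let f : A → A satisfy f(sInf S) = sSup (f '' S) for every S ⊆ A, and let g : A → A be antitone. Then f(a) ≤ g(a) for all a ∈ A if and only if f(m) ≤ g(m) for all m ∈ M. -/
theorem primitive_validity_transfer_dual {A : Type*} [CompleteLattice A] (M : Set A)
    (hM : ∀ a : A, a = sInf {m ∈ M | a ≤ m})
    (f : A → A) (hf : ∀ S : Set A, f (sInf S) = sSup (f '' S))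
    (g : A → A) (hg : Antitone g) :
    (∀ a : A, f a ≤ g a) ↔ ∀ m ∈ M, f m ≤ g m := by
  constructor
  · intro h m _; exact h m
  · intro h a
    have : f a = sSup (f '' {m ∈ M | a ≤ m}) := by rw [hM a, hf]; rw [← hM a]
    rw [this]
    apply sSup_le
    rintro _ ⟨m, ⟨hmM, ham⟩, rfl⟩
    exact (h m hmM).trans (hg ham)
end

section
/- Let A be a complete lattice, let D ⊆ A be join-dense (every a equals sSup {d ∈ D | d ≤ a}), let f : A → A be completely join-preserving (f(sSup S) = sSup (f '' S) for all S ⊆ A), and let j ∈ A be completely join-prime (for every S ⊆ A, if j ≤ sSup S then j ≤ s for some s ∈ S). If j ≤ f(a) for some a ∈ A, then there exists d ∈ D with d ≤ a and j ≤ f(d). -/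
theorem alba_approximation {A : Type*} [CompleteLattice A] (D : Set A)
    (hD : ∀ a : A, a = sSup {d ∈ D | d ≤ a})
    (f : A → A) (hf : ∀ S : Set A, f (sSup S) = sSup (f '' S))
    (j : A) (hj : ∀ S : Set A, j ≤ sSup S → ∃ s ∈ S, j ≤ s)
    (a : A) (h : j ≤ f a) :
    ∃ d ∈ D, d ≤ a ∧ j ≤ f d := by
  have h' : j ≤ sSup (f '' {d ∈ D | d ≤ a}) := by
    rw [← hf]; rw [hD a] at h; exact h
  obtain ⟨s, ⟨d, ⟨hdD, hda⟩, rfl⟩, hjs⟩ := hj _ h'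
  exact ⟨d, hdD, hda, hjs⟩
end

section
/- Let H be a Heyting algebra equipped with functions ◇, ■, ◆, □ : H → H such that for all a, b ∈ H: ◇a ≤ b ↔ a ≤ ■b, and ◆a ≤ b ↔ a ≤ □b. Then the Fischer Servi inequality ◇(p ⇨ q) ≤ □p ⇨ ◇q holds for all p, q ∈ H if and only if ◆a ⇨ ■b ≤ ■(a ⇨ b) holds for all a, b ∈ H. -/
theorem fischer_servi_reduction {H : Type*} [HeytingAlgebra H]
    (dia bsq bd box : H → H)
    (h1 : ∀ a b : H, dia a ≤ b ↔ a ≤ bsq b)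
    (h2 : ∀ a b : H, bd a ≤ b ↔ a ≤ box b) :
    (∀ p q : H, dia (p ⇨ q) ≤ box p ⇨ dia q) ↔
      (∀ a b : H, bd a ⇨ bsq b ≤ bsq (a ⇨ b)) := by
  constructor
  · intro FS a b
    rw [← h1]
    exact (FS (bd a) (bsq b)).trans
      (himp_le_himp ((h2 a (bd a)).mp le_rfl) ((h1 (bsq b) b).mpr le_rfl))
  · intro P p q
    rw [h1]
    exact le_trans
      (himp_le_himp ((h2 (box p) p).mpr le_rfl) ((h1 q (dia q)).mp le_rfl))
      (P (box p) (dia q))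
end

section
/- Let A be a commutative residuated lattice: a lattice with a commutative, associative, monotone multiplication * and an operation ⇨ satisfying a * b ≤ c ↔ b ≤ a ⇨ c for all a, b, c. Then the Frege inequality p ⇨ (q ⇨ r) ≤ (p ⇨ q) ⇨ (p ⇨ r) holds for all p, q, r ∈ A if and only if x * (y * z) ≤ (x * y) * (x * z) holds for all x, y, z ∈ A. -/
theorem frege_reduction {A : Type*} [Lattice A] (mul himp : A → A → A)
    (hcomm : ∀ a b : A, mul a b = mul b a)
    (hassoc : ∀ a b c : A, mul (mul a b) c = mul a (mul b c))
    (hmono : ∀ a : A, Monotone (mul a))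
    (hres : ∀ a b c : A, mul a b ≤ c ↔ b ≤ himp a c) :
    (∀ p q r : A, himp p (himp q r) ≤ himp (himp p q) (himp p r)) ↔
      (∀ x y z : A, mul x (mul y z) ≤ mul (mul x y) (mul x z)) := by
  have hmono' : ∀ a b c : A, b ≤ c → mul b a ≤ mul c a := by
    intro a b c h
    rw [hcomm b a, hcomm c a]; exact hmono a h
  constructor
  · intro hF x y z
    set r0 := mul (mul x y) (mul x z) with hr0
    have hz : z ≤ himp x (himp (mul x y) r0) := by
      rw [← hres, ← hres]
    have hz2 : z ≤ himp (himp x (mul x y)) (himp x r0) :=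
      le_trans hz (hF x (mul x y) r0)
    have hy : y ≤ himp x (mul x y) := (hres _ _ _).mp (le_refl _)
    have : mul y z ≤ mul (himp x (mul x y)) z :=
      hmono' z y (himp x (mul x y)) hy
    have h2 : mul (himp x (mul x y)) z ≤ himp x r0 := (hres _ _ _).mpr hz2
    rw [hres]
    exact le_trans this h2
  · intro hD p q r
    rw [← hres, ← hres]
    have h1 : mul p (mul (himp p q) (himp p (himp q r)))
        ≤ mul (mul p (himp p q)) (mul p (himp p (himp q r))) := hD _ _ _
    have h2 : mul p (himp p q) ≤ q := (hres _ _ _).mpr (le_refl _)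
    have h3 : mul p (himp p (himp q r)) ≤ himp q r := (hres _ _ _).mpr (le_refl _)
    refine le_trans h1 (le_trans (hmono' _ _ _ h2) (le_trans (hmono q h3) ?_))
    exact (hres _ _ _).mpr (le_refl _)
end

section
/- Let A be a generalized co-Heyting algebra (a lattice with bottom ⊥, join ⊔, and a difference operation \ satisfying a \ b ≤ c ↔ a ≤ b ⊔ c for all a, b, c). Let f : A → A satisfy f(a ⊔ b) = f(a) ⊔ f(b) for all a, b and f(⊥) = ⊥, and let γ, g : A → A be arbitrary functions. Then f(γ(p)) ≤ g(p) holds for all p ∈ A if and only if f(p') ≤ g(p) ⊔ f(p' \ γ(p)) holds for all p, p' ∈ A. -/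
theorem quasi_special_to_primitive {A : Type*} [GeneralizedCoheytingAlgebra A]
    (f : A → A) (hf : ∀ a b : A, f (a ⊔ b) = f a ⊔ f b) (hbot : f ⊥ = ⊥)
    (γ g : A → A) :
    (∀ p : A, f (γ p) ≤ g p) ↔ (∀ p p' : A, f p' ≤ g p ⊔ f (p' \ γ p)) := by
  have mono : ∀ a b : A, a ≤ b → f a ≤ f b := by
    intro a b hab
    have : f (a ⊔ b) = f b := by rw [sup_eq_right.2 hab]
    rw [hf] at this
    exact this ▸ le_sup_left
  constructor
  · intro h p p'
    calc f p' ≤ f (γ p ⊔ (p' \ γ p)) := mono _ _ (by simp [sup_sdiff_self, le_sup_sdiff])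
    _ = f (γ p) ⊔ f (p' \ γ p) := hf _ _
    _ ≤ g p ⊔ f (p' \ γ p) := sup_le_sup_right (h p) _
  · intro h p
    have := h p (γ p)
    simpa [sdiff_self, hbot] using this
end
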